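/- The maximum over all real Euler angles (α₁,β₁,γ₁,α₂,β₂,γ₂) ∈ ℝ⁶ of the measurement-assisted transition probability P_{1→2}^{(1)}(U(α₁,β₁,γ₁), U(α₂,β₂,γ₂)) equals (3/50)·(9+√6); that is, the supremum is attained and its value is (3/50)·(9+√6) ≈ 0.687. -/

import Mathlib

open Matrix

/-- Measurement-assisted transition probability `P_{1→k}^{(j)}`:
indices are 0-based, so state `|1⟩` is index `0`, state `|2⟩` is index `1`,
state `|3⟩` is index `2`.  Here `ρ = U₁|1⟩⟨1|U₁†`, `P = |j⟩⟨j|`, and the value is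
`⟨k| U₂ (P ρ P + (I−P) ρ (I−P)) U₂† |k⟩` (a real number). -/
noncomputable def measProb (j k : Fin 3) (U₁ U₂ : Matrix (Fin 3) (Fin 3) ℂ) : ℝ :=
  let ρ : Matrix (Fin 3) (Fin 3) ℂ := U₁ * Matrix.single 0 0 1 * U₁ᴴ
  let P : Matrix (Fin 3) (Fin 3) ℂ := Matrix.single j j 1
  ((U₂ * (P * ρ * P + (1 - P) * ρ * (1 - P)) * U₂ᴴ) k k).re

/-- The Wigner matrix `U(α,β,γ)` of the spin-1 `ZYZ` Euler parameterization. -/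
noncomputable def Umat (α β γ : ℝ) : Matrix (Fin 3) (Fin 3) ℂ :=
  !![Complex.exp (-Complex.I * (↑α + ↑γ)) * (Real.cos (β/2) : ℂ)^2,
       -(Complex.exp (-Complex.I * ↑α) / (Real.sqrt 2 : ℂ)) * (Real.sin β : ℂ),
       Complex.exp (-Complex.I * (↑α - ↑γ)) * (Real.sin (β/2) : ℂ)^2;
     (Complex.exp (-Complex.I * ↑γ) / (Real.sqrt 2 : ℂ)) * (Real.sin β : ℂ),
       (Real.cos β : ℂ),
       -(Complex.exp (Complex.I * ↑γ) / (Real.sqrt 2 : ℂ)) * (Real.sin β : ℂ);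
     Complex.exp (Complex.I * (↑α - ↑γ)) * (Real.sin (β/2) : ℂ)^2,
       (Complex.exp (Complex.I * ↑α) / (Real.sqrt 2 : ℂ)) * (Real.sin β : ℂ),
       Complex.exp (Complex.I * (↑α + ↑γ)) * (Real.cos (β/2) : ℂ)^2]

/-!
Write `ψ = U₁|1⟩`. Dephasing in the basis vector `|1⟩` only kills the coherences between `|1⟩`
and `|2⟩, |3⟩`, so `P = |(U₂)₂₁ ψ₁|² + |(U₂)₂₂ ψ₂ + (U₂)₂₃ ψ₃|²`. In Euler angles, with
`x = cos β₁`, this becomes `(3 - x²)/8 + A cos 2β₂ + B sin 2β₂` where `A = (1 - 3x²)/8` and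
`B = -sin β₁ (1 - x) cos (α₁ + γ₂) / 4`. Maximising over `2β₂` gives `(3 - x²)/8 + √(A² + B²)`,
largest when `cos (α₁ + γ₂) = ±1`, and the resulting one-variable bound on `[-1, 1]` is a
polynomial inequality whose gap has a double root at `x = (1 - √6)/5`.
-/

section

open Complex

lemma measProb_zero_eq_normSq_add_normSq (k : Fin 3) (U₁ U₂ : Matrix (Fin 3) (Fin 3) ℂ) :
    measProb 0 k U₁ U₂ =
      normSq (U₂ k 0 * U₁ 0 0) + normSq (U₂ k 1 * U₁ 1 0 + U₂ k 2 * U₁ 2 0) := by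
  simp only [measProb, Matrix.mul_apply, Fin.sum_univ_three, Matrix.conjTranspose_apply,
    Matrix.add_apply, Matrix.sub_apply, Matrix.one_apply, Matrix.single, Matrix.of_apply]
  norm_num [Fin.ext_iff, normSq_apply, add_re, add_im, mul_re, mul_im, conj_re, conj_im]
  ring

lemma normSq_exp_of_re_eq_zero {z : ℂ} (hz : z.re = 0) : normSq (exp z) = 1 := by
  rw [normSq_eq_norm_sq, norm_exp, hz, Real.exp_zero, one_pow]

lemma normSq_ofReal_add_mul_exp_mul_I (a b θ : ℝ) :
    normSq (a + b * exp (θ * I)) = a ^ 2 + b ^ 2 + 2 * a * b * Real.cos θ := by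
  rw [exp_mul_I, ← ofReal_cos, ← ofReal_sin, normSq_apply]
  simp only [add_re, add_im, mul_re, mul_im, ofReal_re, ofReal_im, I_re, I_im]
  linear_combination b ^ 2 * Real.sin_sq_add_cos_sq θ

lemma measProb_Umat (α₁ β₁ γ₁ α₂ β₂ γ₂ : ℝ) :
    measProb 0 1 (Umat α₁ β₁ γ₁) (Umat α₂ β₂ γ₂) =
      (3 - Real.cos β₁ ^ 2) / 8 + (1 - 3 * Real.cos β₁ ^ 2) / 8 * Real.cos (2 * β₂)
        - Real.sin β₁ * (1 - Real.cos β₁) / 4 * Real.cos (α₁ + γ₂) * Real.sin (2 * β₂) := by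
  rw [measProb_zero_eq_normSq_add_normSq]
  simp only [Umat, Matrix.of_apply, Matrix.cons_val]
  -- up to a global phase only the relative phase `α₁ + γ₂` survives
  have hfactor : (Real.cos β₂ : ℂ) * (exp (-I * γ₁) / (Real.sqrt 2 : ℂ) * (Real.sin β₁ : ℂ))
      + -(exp (I * γ₂) / (Real.sqrt 2 : ℂ)) * (Real.sin β₂ : ℂ)
        * (exp (I * (α₁ - γ₁)) * (Real.sin (β₁ / 2) : ℂ) ^ 2)
      = exp (-I * γ₁) / (Real.sqrt 2 : ℂ) * ((Real.cos β₂ * Real.sin β₁ : ℝ)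
        + (-(Real.sin β₂ * Real.sin (β₁ / 2) ^ 2) : ℝ) * exp ((α₁ + γ₂ : ℝ) * I)) := by
    have hexp : exp (I * γ₂) * exp (I * (α₁ - γ₁)) = exp (-I * γ₁) * exp ((α₁ + γ₂ : ℝ) * I) := by
      rw [← exp_add, ← exp_add]
      push_cast
      ring_nf
    simp only [ofReal_mul, ofReal_neg, ofReal_pow]
    linear_combination (-(Real.sin β₂ * Real.sin (β₁ / 2) ^ 2 : ℂ) / (Real.sqrt 2 : ℂ)) * hexp
  rw [hfactor, normSq_mul (_ / _), normSq_ofReal_add_mul_exp_mul_I]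
  simp only [normSq_mul, normSq_div, normSq_ofReal, map_pow, normSq_exp_of_re_eq_zero, mul_re,
    neg_re, neg_im, add_re, add_im, I_re, I_im, ofReal_re, ofReal_im, zero_mul, mul_zero, sub_zero,
    neg_zero, add_zero, Real.mul_self_sqrt zero_le_two]
  have hcos : Real.cos (β₁ / 2) ^ 2 = (1 + Real.cos β₁) / 2 := by
    rw [Real.cos_sq, mul_div_cancel₀ _ two_ne_zero]
    ring
  have hsin : Real.sin (β₁ / 2) ^ 2 = (1 - Real.cos β₁) / 2 := by
    rw [Real.sin_sq, hcos]
    ring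
  rw [Real.cos_two_mul, Real.sin_two_mul]
  linear_combination (Real.sin β₂ ^ 2 / 2 * (Real.cos (β₁ / 2) ^ 2 + (1 + Real.cos β₁) / 2)) * hcos
    + (Real.sin β₂ ^ 2 / 2 * (Real.sin (β₁ / 2) ^ 2 + (1 - Real.cos β₁) / 2)
      - Real.cos β₂ * Real.sin β₂ * Real.sin β₁ * Real.cos (α₁ + γ₂)) * hsin
    + (1 + Real.cos β₁ ^ 2) / 4 * Real.sin_sq β₂ + Real.cos β₂ ^ 2 / 2 * Real.sin_sq β₁

end

namespace Real

lemma mul_cos_add_mul_sin_le {A B R : ℝ} (hR : 0 ≤ R) (h : A ^ 2 + B ^ 2 ≤ R ^ 2) (θ : ℝ) :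
    A * cos θ + B * sin θ ≤ R := by
  refine le_of_sq_le_sq ?_ hR
  nlinarith [sq_nonneg (A * sin θ - B * cos θ), sin_sq_add_cos_sq θ]

lemma exists_mul_cos_add_mul_sin_eq {A B R : ℝ} (hR : 0 ≤ R) (h : A ^ 2 + B ^ 2 = R ^ 2) :
    ∃ θ, A * cos θ + B * sin θ = R := by
  rcases hR.eq_or_lt with rfl | hR
  · have hA : A ^ 2 = 0 := by nlinarith [sq_nonneg A, sq_nonneg B]
    exact ⟨0, by simpa using hA⟩
  have hnorm : ‖(A + B * Complex.I : ℂ)‖ = R := by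
    rw [Complex.norm_add_mul_I, h, sqrt_sq hR.le]
  have hz : (A + B * Complex.I : ℂ) ≠ 0 := by
    rw [← norm_ne_zero_iff, hnorm]
    exact hR.ne'
  refine ⟨Complex.arg (A + B * Complex.I), ?_⟩
  rw [Complex.cos_arg hz, Complex.sin_arg, hnorm]
  simp only [Complex.add_re, Complex.add_im, Complex.mul_re, Complex.mul_im, Complex.ofReal_re,
    Complex.ofReal_im, Complex.I_re, Complex.I_im]
  field_simp
  linear_combination h

end Real

/-- The squared amplitude of the `2 β₂`-oscillation of `measProb 0 1` when `cos β₁ = x` and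
`cos (α₁ + γ₂) = ±1`. -/
noncomputable def amplitudeSq (x : ℝ) : ℝ :=
  ((1 - 3 * x ^ 2) / 8) ^ 2 + (1 - x ^ 2) * ((1 - x) / 4) ^ 2

lemma two_le_sqrt_six : 2 ≤ √6 := by
  nlinarith [Real.sq_sqrt (show (0 : ℝ) ≤ 6 by norm_num), Real.sqrt_nonneg 6]

lemma sqrt_six_le_three : √6 ≤ 3 := by
  nlinarith [Real.sq_sqrt (show (0 : ℝ) ≤ 6 by norm_num), Real.sqrt_nonneg 6]

lemma sq_sub_amplitudeSq (x : ℝ) :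
    (3 / 50 * (9 + √6) - (3 - x ^ 2) / 8) ^ 2 - amplitudeSq x
      = (x - (1 - √6) / 5) ^ 2
        * (4 * (1 - x ^ 2) + (84 * √6 - 144) / 25 * (1 + x) + (96 + 44 * √6) / 25 * (1 - x))
        / 64 := by
  have hw : √6 ^ 2 = 6 := Real.sq_sqrt (by norm_num)
  unfold amplitudeSq
  linear_combination
    (-2 / 625 * √6 - 1 / 1000 * x * √6 + 87 / 10000 - 3 / 125 * x - 3 / 400 * x ^ 2) * hw

lemma amplitudeSq_le {x : ℝ} (hx₀ : -1 ≤ x) (hx₁ : x ≤ 1) :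
    amplitudeSq x ≤ (3 / 50 * (9 + √6) - (3 - x ^ 2) / 8) ^ 2 := by
  have hw := two_le_sqrt_six
  have hgap := sq_sub_amplitudeSq x
  have hpos : 0 ≤ (x - (1 - √6) / 5) ^ 2
      * (4 * (1 - x ^ 2) + (84 * √6 - 144) / 25 * (1 + x) + (96 + 44 * √6) / 25 * (1 - x)) := by
    apply mul_nonneg (sq_nonneg _)
    nlinarith
  linarith

lemma amplitudeSq_one_sub_sqrt_six_div_five :
    amplitudeSq ((1 - √6) / 5) = (3 / 50 * (9 + √6) - (3 - ((1 - √6) / 5) ^ 2) / 8) ^ 2 := by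
  linarith [sq_sub_amplitudeSq ((1 - √6) / 5), show ((1 - √6) / 5 - (1 - √6) / 5) ^ 2 = 0 by simp]

/-- the maximum over all real Euler angles of the
measurement-assisted transition probability
`P_{1→2}^{(1)}(U(α₁,β₁,γ₁), U(α₂,β₂,γ₂))` is attained and equals
`(3/50)·(9+√6) ≈ 0.687`.  (0-based indices: `j = 0` is `|1⟩`, `k = 1` is `|2⟩`.) -/
theorem stmt11 :
    IsGreatest
      {x : ℝ | ∃ α₁ β₁ γ₁ α₂ β₂ γ₂ : ℝ,
        x = measProb 0 1 (Umat α₁ β₁ γ₁) (Umat α₂ β₂ γ₂)}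
      ((3/50) * (9 + Real.sqrt 6)) := by
  have hgap (x : ℝ) : 0 ≤ 3 / 50 * (9 + √6) - (3 - x ^ 2) / 8 := by
    nlinarith [Real.sqrt_nonneg 6]
  constructor
  · have hx₀ : -1 ≤ (1 - √6) / 5 ∧ (1 - √6) / 5 ≤ 1 := by
      constructor <;> linarith [two_le_sqrt_six, sqrt_six_le_three]
    set x₀ := (1 - √6) / 5
    set β₁ := Real.arccos x₀
    have hcos : Real.cos β₁ = x₀ := Real.cos_arccos hx₀.1 hx₀.2
    obtain ⟨θ, hθ⟩ := Real.exists_mul_cos_add_mul_sin_eq (A := (1 - 3 * x₀ ^ 2) / 8)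
      (B := Real.sin β₁ * (1 - x₀) / 4) (hgap x₀) (by
        rw [← amplitudeSq_one_sub_sqrt_six_div_five, amplitudeSq, mul_div_assoc, mul_pow,
          Real.sin_sq, hcos])
    refine ⟨Real.pi, β₁, 0, 0, θ / 2, 0, ?_⟩
    rw [measProb_Umat, hcos, add_zero, Real.cos_pi, mul_div_cancel₀ _ two_ne_zero]
    linarith
  · rintro _ ⟨α₁, β₁, γ₁, α₂, β₂, γ₂, rfl⟩
    rw [measProb_Umat]
    have hamp := amplitudeSq_le (Real.neg_one_le_cos β₁) (Real.cos_le_one β₁)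
    have hcos := Real.cos_sq_le_one (α₁ + γ₂)
    have := Real.mul_cos_add_mul_sin_le (A := (1 - 3 * Real.cos β₁ ^ 2) / 8)
      (B := -(Real.sin β₁ * (1 - Real.cos β₁) / 4 * Real.cos (α₁ + γ₂))) (hgap (Real.cos β₁)) (by
        unfold amplitudeSq at hamp
        nlinarith [Real.sin_sq β₁, mul_le_mul_of_nonneg_left hcos
          (sq_nonneg (Real.sin β₁ * (1 - Real.cos β₁) / 4))]) (2 * β₂)
    linarith
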